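/- arXiv:2102.10568 — 2 statements merged into one kernel-verified Lean document; each statement's English description precedes it below -/
import Mathlib

section
/- Let G be a connected circular-arc graph, let u be a vertex of G, and let k be a positive integer. Then any two dominating multisets of G of size k that both contain u are TS-reachable from one another; in other words, all k-element dominating multisets of G containing u lie in the same connected component of the token-sliding reconfiguration graph. -/
/-- A multiset `D` of vertices dominates `G`: every vertex occurs in `D`
or is adjacent to a vertex occurring in `D`. -/
def IsDominatingMultiset {V : Type*} (G : SimpleGraph V) (D : Multiset V) : Prop :=
  ∀ w : V, w ∈ D ∨ ∃ u ∈ D, G.Adj u w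

/-- A token slide along an edge `uv`: remove one copy of `u`, add one copy of `v`. -/
def TokenSlide {V : Type*} [DecidableEq V] (G : SimpleGraph V) (D D' : Multiset V) : Prop :=
  ∃ u v : V, G.Adj u v ∧ u ∈ D ∧ D' = v ::ₘ D.erase u

/-- One step of token-sliding reconfiguration between dominating multisets. -/
def TSStep {V : Type*} [DecidableEq V] (G : SimpleGraph V) (D D' : Multiset V) : Prop :=
  IsDominatingMultiset G D ∧ IsDominatingMultiset G D' ∧ TokenSlide G D D'

/-- `D'` is TS-reachable from `D`: there is a finite sequence of dominating multisets
from `D` to `D'` in which each multiset is obtained from the previous one by a token slide. -/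
def TSReachable {V : Type*} [DecidableEq V] (G : SimpleGraph V) (D D' : Multiset V) : Prop :=
  Relation.ReflTransGen (TSStep G) D D'

/-- The arc of the circle `ℝ / ℤ` obtained by projecting the real interval `[s, e]`. -/
def circleArc (s e : ℝ) : Set (AddCircle (1 : ℝ)) :=
  (fun x : ℝ => (x : AddCircle (1 : ℝ))) '' Set.Icc s e

/-- `G` is a circular-arc graph: vertices can be assigned nonempty arcs of a circle
so that two distinct vertices are adjacent iff their arcs intersect. -/
def IsCircularArcGraph {V : Type*} (G : SimpleGraph V) : Prop :=
  ∃ s e : V → ℝ, (∀ v, s v ≤ e v) ∧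
    ∀ u v : V, u ≠ v →
      (G.Adj u v ↔ (circleArc (s u) (e u) ∩ circleArc (s v) (e v)).Nonempty)


/-!
Induct on the closed neighbourhood of the anchor `u` (ordered by strict inclusion) and then on the
number of tokens, requiring only a target set `T` of vertices to stay dominated. If `u` dominates
`T`, all other tokens can walk to `u`. If a token `t` of one configuration dominates strictly more
than `u`, the induction hypothesis for the anchor `t` reaches the other configuration with one copy
of `u` replaced by `t`, and a single slide finishes. Otherwise, going round the circle from the arc
of `u`, let `w` be the first target that `u` misses and `c` the neighbour of `w` whose arc reaches
furthest. In both configurations the token dominating `w` slides to `c` (through `w` if needed)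
without losing a target, and the remaining tokens are reconfigured for the targets `c` misses.
-/

open Multiset

section TokenSlide

variable {V : Type*} [DecidableEq V] {G : SimpleGraph V}

lemma tokenSlide_cons {a b : V} (h : G.Adj a b) (X : Multiset V) :
    TokenSlide G (a ::ₘ X) (b ::ₘ X) :=
  ⟨a, b, h, mem_cons_self a X, by rw [erase_cons_head]⟩

lemma TokenSlide.symm {D D' : Multiset V} (h : TokenSlide G D D') : TokenSlide G D' D := by
  obtain ⟨a, b, hab, ha, rfl⟩ := h
  simpa only [cons_erase ha] using tokenSlide_cons hab.symm (D.erase a)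

lemma TokenSlide.cons {D D' : Multiset V} (h : TokenSlide G D D') (c : V) :
    TokenSlide G (c ::ₘ D) (c ::ₘ D') := by
  obtain ⟨a, b, hab, ha, rfl⟩ := h
  refine ⟨a, b, hab, mem_cons_of_mem ha, ?_⟩
  rw [cons_swap, erase_cons_tail_of_mem ha]

end TokenSlide

namespace SimpleGraph

variable {V : Type*} (G : SimpleGraph V)

def closedNbhd (x : V) : Set V := insert x (G.neighborSet x)

def DominatesOn (T : Set V) (D : Multiset V) : Prop :=
  ∀ v ∈ T, ∃ x ∈ D, v ∈ G.closedNbhd x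

/-- `w` is the first target missed by `u`, and `c` the neighbour of `w` reaching furthest beyond
it: a token dominating `w` that does not dominate strictly more than `u` may be replaced by `c`,
or by `w` when it is not adjacent to `c`, without losing a target that `u` misses. -/
def HasSweepProperty : Prop :=
  ∀ (u : V) (T : Set V), ¬ T ⊆ G.closedNbhd u → ∃ w ∈ T \ G.closedNbhd u, ∃ c,
    w ∈ G.closedNbhd c ∧ ∀ d, w ∈ G.closedNbhd d → ¬ G.closedNbhd u ⊂ G.closedNbhd d →
      ∀ v ∈ T \ G.closedNbhd u, v ∈ G.closedNbhd d →
        v ∈ G.closedNbhd c ∧ (c ∉ G.closedNbhd d → v ∈ G.closedNbhd w)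

variable {G}

lemma mem_closedNbhd {x v : V} : v ∈ G.closedNbhd x ↔ v = x ∨ G.Adj x v := Iff.rfl

lemma self_mem_closedNbhd (x : V) : x ∈ G.closedNbhd x := Set.mem_insert x _

lemma mem_closedNbhd_comm {x v : V} : v ∈ G.closedNbhd x ↔ x ∈ G.closedNbhd v := by
  simp only [mem_closedNbhd, eq_comm, G.adj_comm]

lemma adj_of_mem_closedNbhd {x v : V} (h : v ∈ G.closedNbhd x) (hne : x ≠ v) : G.Adj x v :=
  h.resolve_left hne.symm

lemma dominatesOn_univ_iff {D : Multiset V} :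
    G.DominatesOn Set.univ D ↔ IsDominatingMultiset G D := by
  simp only [DominatesOn, IsDominatingMultiset, Set.mem_univ, true_implies, mem_closedNbhd]
  refine forall_congr' fun v => ⟨?_, ?_⟩
  · rintro ⟨x, hx, rfl | hxv⟩
    exacts [Or.inl hx, Or.inr ⟨x, hx, hxv⟩]
  · rintro (hv | ⟨x, hx, hxv⟩)
    exacts [⟨v, hv, Or.inl rfl⟩, ⟨x, hx, Or.inr hxv⟩]

lemma DominatesOn.mono {T T' : Set V} {D : Multiset V} (h : G.DominatesOn T D) (hT : T' ⊆ T) :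
    G.DominatesOn T' D :=
  fun v hv => h v (hT hv)

lemma DominatesOn.of_erase_subset [DecidableEq V] {T : Set V} {D D' : Multiset V} {d : V}
    (h : G.DominatesOn T D) (hD' : D.erase d ⊆ D')
    (hd : ∀ v ∈ T, v ∈ G.closedNbhd d → ∃ x ∈ D', v ∈ G.closedNbhd x) :
    G.DominatesOn T D' := by
  intro v hv
  obtain ⟨x, hxD, hvx⟩ := h v hv
  by_cases hxd : x = d
  · exact hd v hv (hxd ▸ hvx)
  · exact ⟨x, hD' ((mem_erase_of_ne hxd).2 hxD), hvx⟩

variable [DecidableEq V]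

variable (G) in
def SlideStepOn (T : Set V) (D D' : Multiset V) : Prop :=
  G.DominatesOn T D ∧ G.DominatesOn T D' ∧ TokenSlide G D D'

variable (G) in
def SlideReachOn (T : Set V) : Multiset V → Multiset V → Prop :=
  Relation.ReflTransGen (G.SlideStepOn T)

lemma slideReachOn_univ : G.SlideReachOn Set.univ = TSReachable G := by
  have hstep : G.SlideStepOn Set.univ = TSStep G := by
    ext D D'
    simp only [SlideStepOn, TSStep, dominatesOn_univ_iff]
  unfold SlideReachOn
  rw [hstep]
  rfl

namespace SlideReachOn

variable {T : Set V} {D D' : Multiset V}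

lemma single (hD : G.DominatesOn T D) (hD' : G.DominatesOn T D') (h : TokenSlide G D D') :
    G.SlideReachOn T D D' :=
  Relation.ReflTransGen.single ⟨hD, hD', h⟩

lemma symm (h : G.SlideReachOn T D D') : G.SlideReachOn T D' D :=
  haveI : Std.Symm (G.SlideStepOn T) := ⟨fun _ _ ⟨hD, hD', h⟩ => ⟨hD', hD, h.symm⟩⟩
  Relation.ReflTransGen.stdSymm.symm _ _ h

lemma trans {D'' : Multiset V} (h : G.SlideReachOn T D D') (h' : G.SlideReachOn T D' D'') :
    G.SlideReachOn T D D'' :=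
  Relation.ReflTransGen.trans h h'

lemma cons {T' : Set V} {c : V} (hT : ∀ v ∈ T, v ∈ G.closedNbhd c ∨ v ∈ T')
    (h : G.SlideReachOn T' D D') : G.SlideReachOn T (c ::ₘ D) (c ::ₘ D') := by
  have hdom {X : Multiset V} (hX : G.DominatesOn T' X) : G.DominatesOn T (c ::ₘ X) := by
    intro v hv
    rcases hT v hv with hvc | hvT'
    · exact ⟨c, mem_cons_self c X, hvc⟩
    · obtain ⟨x, hx, hvx⟩ := hX v hvT'
      exact ⟨x, mem_cons_of_mem hx, hvx⟩
  induction h with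
  | refl => exact Relation.ReflTransGen.refl
  | tail _ hstep ih => exact ih.tail ⟨hdom hstep.1, hdom hstep.2.1, hstep.2.2.cons c⟩

end SlideReachOn

lemma slideReachOn_cons_of_walk {T : Set V} {u a b : V} {X : Multiset V} (hu : u ∈ X)
    (hT : T ⊆ G.closedNbhd u) (p : G.Walk a b) : G.SlideReachOn T (a ::ₘ X) (b ::ₘ X) := by
  have hdom (y : V) : G.DominatesOn T (y ::ₘ X) := fun v hv => ⟨u, mem_cons_of_mem hu, hT hv⟩
  induction p with
  | nil => exact Relation.ReflTransGen.refl
  | cons hxy _ ih => exact (SlideReachOn.single (hdom _) (hdom _) (tokenSlide_cons hxy X)).trans ih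

lemma slideReachOn_replicate (hconn : G.Preconnected) {T : Set V} {u : V}
    (hT : T ⊆ G.closedNbhd u) (X : Multiset V) :
    G.SlideReachOn T (u ::ₘ X) (replicate (card X + 1) u) := by
  induction X using Multiset.induction with
  | empty => exact Relation.ReflTransGen.refl
  | cons a X ih =>
    obtain ⟨p⟩ := hconn a u
    have hgather : G.SlideReachOn T (a ::ₘ u ::ₘ X) (u ::ₘ u ::ₘ X) :=
      slideReachOn_cons_of_walk (mem_cons_self u X) hT p
    rw [cons_swap, card_cons, replicate_succ]
    exact hgather.trans (ih.cons fun v hv => Or.inr hv)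

lemma slideReachOn_of_subset_closedNbhd (hconn : G.Preconnected) {T : Set V} {u : V}
    (hT : T ⊆ G.closedNbhd u) {D₁ D₂ : Multiset V} (hu₁ : u ∈ D₁) (hu₂ : u ∈ D₂)
    (hcard : card D₁ = card D₂) : G.SlideReachOn T D₁ D₂ := by
  rw [← cons_erase hu₁, ← cons_erase hu₂] at hcard ⊢
  rw [card_cons, card_cons] at hcard
  exact (slideReachOn_replicate hconn hT _).trans
    (hcard ▸ (slideReachOn_replicate hconn hT _).symm)

lemma slideReachOn_of_closedNbhd_ssubset {T : Set V} {u t : V}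
    (hut : G.closedNbhd u ⊂ G.closedNbhd t) {A B : Multiset V} (ht : t ∈ A) (hu : u ∈ B)
    (hcard : card A = card B) (hA : G.DominatesOn T A) (hB : G.DominatesOn T B)
    (ih : ∀ D₁ D₂ : Multiset V, t ∈ D₁ → t ∈ D₂ → card D₁ = card D₂ →
      G.DominatesOn T D₁ → G.DominatesOn T D₂ → G.SlideReachOn T D₁ D₂) :
    G.SlideReachOn T A B := by
  have htu : t ≠ u := fun h => hut.ne (h ▸ rfl)
  have hC : G.DominatesOn T (t ::ₘ B.erase u) :=
    hB.of_erase_subset (subset_cons _ t) fun v _ hv => ⟨t, mem_cons_self t _, hut.subset hv⟩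
  have hslide : TokenSlide G (t ::ₘ B.erase u) B := by
    simpa only [cons_erase hu] using
      tokenSlide_cons (adj_of_mem_closedNbhd (hut.subset (self_mem_closedNbhd u)) htu) (B.erase u)
  refine (ih A _ ht (mem_cons_self t _) ?_ hA hC).trans (.single hC hB hslide)
  rw [card_cons, card_erase_add_one hu, hcard]

section Sweep

variable {T : Set V} {u w c d : V} {D : Multiset V}

lemma slideReachOn_cons_erase (hwc : w ∈ G.closedNbhd c) (hwd : w ∈ G.closedNbhd d)
    (hsweep : ∀ v ∈ T \ G.closedNbhd u, v ∈ G.closedNbhd d →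
      v ∈ G.closedNbhd c ∧ (c ∉ G.closedNbhd d → v ∈ G.closedNbhd w))
    (hu : u ∈ D.erase d) (hd : d ∈ D) (hD : G.DominatesOn T D) :
    G.SlideReachOn T D (c ::ₘ D.erase d) := by
  have hdom {y : V} (hy : ∀ v ∈ T \ G.closedNbhd u, v ∈ G.closedNbhd d → v ∈ G.closedNbhd y) :
      G.DominatesOn T (y ::ₘ D.erase d) := by
    refine hD.of_erase_subset (subset_cons _ y) fun v hv hvd => ?_
    by_cases hvu : v ∈ G.closedNbhd u
    · exact ⟨u, mem_cons_of_mem hu, hvu⟩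
    · exact ⟨y, mem_cons_self y _, hy v ⟨hv, hvu⟩ hvd⟩
  have hfinal := hdom fun v hv hvd => (hsweep v hv hvd).1
  by_cases hcd : c ∈ G.closedNbhd d
  · rcases hcd with rfl | hdc
    · rw [cons_erase hd]
      exact Relation.ReflTransGen.refl
    · exact .single hD hfinal ⟨d, c, hdc, hd, rfl⟩
  have hmid := hdom fun v hv hvd => (hsweep v hv hvd).2 hcd
  have hdw : d ≠ w := by rintro rfl; exact hcd (mem_closedNbhd_comm.1 hwc)
  have hwc' : w ≠ c := by rintro rfl; exact hcd hwd
  refine (SlideReachOn.single hD hmid ⟨d, w, adj_of_mem_closedNbhd hwd hdw, hd, rfl⟩).trans ?_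
  exact .single hmid hfinal
    (tokenSlide_cons (adj_of_mem_closedNbhd (mem_closedNbhd_comm.1 hwc) hwc') _)

lemma DominatesOn.diff_closedNbhd_erase (hD : G.DominatesOn T D) (hu : u ∈ D.erase d)
    (hsweep : ∀ v ∈ T \ G.closedNbhd u, v ∈ G.closedNbhd d → v ∈ G.closedNbhd c) :
    G.DominatesOn (T \ G.closedNbhd c) (D.erase d) := by
  refine (hD.mono Set.sdiff_subset).of_erase_subset (Subset.refl _)
    fun v ⟨hvT, hvc⟩ hvd => ⟨u, hu, ?_⟩
  by_contra hvu
  exact hvc (hsweep v ⟨hvT, hvu⟩ hvd)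

end Sweep

theorem slideReachOn_of_mem [Finite V] (hconn : G.Preconnected) (hsweep : G.HasSweepProperty)
    (u : V) (T : Set V) {D₁ D₂ : Multiset V} (hu₁ : u ∈ D₁) (hu₂ : u ∈ D₂)
    (hcard : card D₁ = card D₂) (hD₁ : G.DominatesOn T D₁) (hD₂ : G.DominatesOn T D₂) :
    G.SlideReachOn T D₁ D₂ := by
  induction u using (InvImage.wf G.closedNbhd wellFounded_gt).induction
    generalizing T D₁ D₂ with
  | _ u ihu =>
  obtain ⟨n, hn⟩ : ∃ n, card D₁ = n := ⟨_, rfl⟩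
  induction n generalizing T D₁ D₂ with
  | zero => exact absurd (card_eq_zero.1 hn ▸ hu₁) (notMem_zero u)
  | succ n ihn =>
  by_cases hTu : T ⊆ G.closedNbhd u
  · exact slideReachOn_of_subset_closedNbhd hconn hTu hu₁ hu₂ hcard
  by_cases hwrap₁ : ∃ t ∈ D₁, G.closedNbhd u ⊂ G.closedNbhd t
  · obtain ⟨t, ht, hut⟩ := hwrap₁
    exact slideReachOn_of_closedNbhd_ssubset hut ht hu₂ hcard hD₁ hD₂ fun _ _ => ihu t hut _
  by_cases hwrap₂ : ∃ t ∈ D₂, G.closedNbhd u ⊂ G.closedNbhd t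
  · obtain ⟨t, ht, hut⟩ := hwrap₂
    exact (slideReachOn_of_closedNbhd_ssubset hut ht hu₁ hcard.symm hD₂ hD₁
      fun _ _ => ihu t hut _).symm
  push Not at hwrap₁ hwrap₂
  obtain ⟨w, ⟨hwT, hwu⟩, c, hwc, hc⟩ := hsweep u T hTu
  have hu_erase {D : Multiset V} {d : V} (hu : u ∈ D) (hwd : w ∈ G.closedNbhd d) :
      u ∈ D.erase d :=
    (mem_erase_of_ne (by rintro rfl; exact hwu hwd)).2 hu
  obtain ⟨d₁, hd₁, hwd₁⟩ := hD₁ w hwT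
  obtain ⟨d₂, hd₂, hwd₂⟩ := hD₂ w hwT
  have hc₁ := hc d₁ hwd₁ (hwrap₁ d₁ hd₁)
  have hc₂ := hc d₂ hwd₂ (hwrap₂ d₂ hd₂)
  have hrec : G.SlideReachOn (T \ G.closedNbhd c) (D₁.erase d₁) (D₂.erase d₂) :=
    ihn _ (hu_erase hu₁ hwd₁) (hu_erase hu₂ hwd₂)
      (by rw [card_erase_of_mem hd₁, card_erase_of_mem hd₂, hcard])
      (hD₁.diff_closedNbhd_erase (hu_erase hu₁ hwd₁) fun v hv hvd => (hc₁ v hv hvd).1)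
      (hD₂.diff_closedNbhd_erase (hu_erase hu₂ hwd₂) fun v hv hvd => (hc₂ v hv hvd).1)
      (by rw [card_erase_of_mem hd₁, hn]; rfl)
  have hlift := hrec.cons (c := c) fun v hv => or_iff_not_imp_left.2 (Set.mem_sdiff_of_mem hv)
  exact (slideReachOn_cons_erase hwc hwd₁ hc₁ (hu_erase hu₁ hwd₁) hd₁ hD₁).trans
    (hlift.trans (slideReachOn_cons_erase hwc hwd₂ hc₂ (hu_erase hu₂ hwd₂) hd₂ hD₂).symm)

end SimpleGraph

lemma circleArc_inter_nonempty_iff {a b c d : ℝ} (hab : a ≤ b) (hcd : c ≤ d) :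
    (circleArc a b ∩ circleArc c d).Nonempty ↔ ∃ n : ℤ, a ≤ d + n ∧ c + n ≤ b := by
  have hcoe {x y : ℝ} : (x : AddCircle (1 : ℝ)) = y ↔ ∃ n : ℤ, x = y + n := by
    rw [← sub_eq_zero, ← AddCircle.coe_sub, AddCircle.coe_eq_zero_iff]
    simp only [zsmul_one, eq_comm (a := (_ : ℝ)), sub_eq_iff_eq_add']
  constructor
  · rintro ⟨-, ⟨x, ⟨hax, hxb⟩, rfl⟩, ⟨y, ⟨hcy, hyd⟩, hyx⟩⟩
    obtain ⟨n, rfl⟩ := hcoe.1 hyx.symm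
    exact ⟨n, by linarith, by linarith⟩
  · rintro ⟨n, h₁, h₂⟩
    set x := max a (c + n)
    refine ⟨x, ⟨x, ⟨le_max_left _ _, max_le hab h₂⟩, rfl⟩,
      ⟨x - n, ⟨?_, ?_⟩, hcoe.2 ⟨-n, by push_cast; ring⟩⟩⟩
    · linarith [le_max_right a (c + n)]
    · linarith [max_le h₁ (by linarith : c + n ≤ d + n)]

noncomputable section ArcModel

variable {V : Type*} (s e : V → ℝ)

def ArcsMeet (x y : V) : Prop :=
  ∃ n : ℤ, s x ≤ e y + n ∧ s y + n ≤ e x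

/-- Shifting the interval of `v` by `windowShift s e u v` puts its left end in `(e u, e u + 1]`;
when the arcs of `u` and `v` are disjoint its right end is then below `s u + 1`, so all these
translates lie in the same gap of `u`. -/
def windowShift (u v : V) : ℤ := ⌊e u - s v⌋ + 1

def windowStart (u v : V) : ℝ := s v + windowShift s e u v

def windowEnd (u v : V) : ℝ := e v + windowShift s e u v

/-- The right end of the last translate of the interval of `x` starting by `windowEnd s e u w`. -/
def reach (u w x : V) : ℝ := e x + ⌊windowEnd s e u w - s x⌋

variable {s e} {u v w t : V}

lemma arcsMeet_self (hx : s t ≤ e t) : ArcsMeet s e t t :=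
  ⟨0, by simpa using hx, by simpa using hx⟩

lemma arcsMeet_iff_translate (m : ℤ) :
    ArcsMeet s e t v ↔ ∃ n : ℤ, s t + n ≤ e v + m ∧ s v + m ≤ e t + n := by
  constructor <;>
  · rintro ⟨n, h₁, h₂⟩
    exact ⟨m - n, by push_cast; linarith, by push_cast; linarith⟩

lemma closedNbhd_eq_setOf_arcsMeet {G : SimpleGraph V} (hse : ∀ x, s x ≤ e x)
    (hadj : ∀ x y, x ≠ y → (G.Adj x y ↔ ArcsMeet s e x y)) (x : V) :
    G.closedNbhd x = {y | ArcsMeet s e x y} := by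
  ext y
  rw [SimpleGraph.mem_closedNbhd, Set.mem_ofPred_eq]
  by_cases hxy : x = y
  · subst hxy
    simpa using arcsMeet_self (hse x)
  · rw [hadj x y hxy]
    simp [Ne.symm hxy]

lemma windowStart_le_windowEnd (hv : s v ≤ e v) : windowStart s e u v ≤ windowEnd s e u v := by
  unfold windowStart windowEnd; linarith

lemma lt_windowStart : e u < windowStart s e u v := by
  have := Int.lt_floor_add_one (e u - s v)
  unfold windowStart windowShift; push_cast; linarith

lemma windowEnd_lt (hv : ¬ ArcsMeet s e u v) : windowEnd s e u v < s u + 1 := by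
  by_contra! hle
  refine hv ⟨windowShift s e u v - 1, ?_, ?_⟩
  · unfold windowEnd at hle; push_cast; linarith
  · have := Int.floor_le (e u - s v)
    unfold windowShift; push_cast; linarith

lemma reach_self (hse : ∀ x, s x ≤ e x) (hw : ¬ ArcsMeet s e u w) :
    reach s e u w w = windowEnd s e u w := by
  have h₁ : e u < windowStart s e u w := lt_windowStart
  have h₂ := windowEnd_lt hw
  have hfloor : ⌊windowEnd s e u w - s w⌋ = windowShift s e u w := by
    unfold windowStart windowEnd at *
    rw [Int.floor_eq_iff]
    constructor <;> linarith [hse u, hse w]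
  unfold reach
  rw [hfloor]
  rfl

lemma windowStart_le_reach (hv : ¬ ArcsMeet s e u v) (htw : ArcsMeet s e t w)
    (htv : ArcsMeet s e t v) (hnot : ¬ {y | ArcsMeet s e u y} ⊂ {y | ArcsMeet s e t y}) :
    windowStart s e u v ≤ reach s e u w t := by
  obtain ⟨n₁, h₁, h₂⟩ := (arcsMeet_iff_translate (windowShift s e u v)).1 htv
  obtain ⟨n₀, h₃, h₄⟩ := (arcsMeet_iff_translate (windowShift s e u w)).1 htw
  by_cases hn₁ : n₁ ≤ ⌊windowEnd s e u w - s t⌋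
  · have : (n₁ : ℝ) ≤ ⌊windowEnd s e u w - s t⌋ := by exact_mod_cast hn₁
    unfold reach; unfold windowStart at *; linarith
  have hn₀ : n₀ ≤ ⌊windowEnd s e u w - s t⌋ := Int.le_floor.2 (by unfold windowEnd; linarith)
  have hn : (n₀ : ℝ) + 1 ≤ n₁ := by exact_mod_cast (by omega : n₀ + 1 ≤ n₁)
  have hvu := windowEnd_lt hv
  have hwu : e u < windowStart s e u w := lt_windowStart
  -- the translate of `t` by `n₁` then contains the translate of `u` by one turn
  refine absurd ⟨fun y hy => ?_, fun hsub => hv (hsub htv)⟩ hnot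
  obtain ⟨m, hm₁, hm₂⟩ := hy
  unfold windowStart windowEnd at *
  exact ⟨m - n₁ + 1, by push_cast; linarith, by push_cast; linarith⟩

theorem hasSweepProperty_of_arcModel [Finite V] {G : SimpleGraph V} (hse : ∀ x, s x ≤ e x)
    (hadj : ∀ x y, x ≠ y → (G.Adj x y ↔ ArcsMeet s e x y)) : G.HasSweepProperty := by
  unfold SimpleGraph.HasSweepProperty
  simp only [closedNbhd_eq_setOf_arcsMeet hse hadj]
  intro u T hT
  obtain ⟨w, ⟨hwT, hwu⟩, hwmin⟩ := Set.exists_min_image (T \ {v | ArcsMeet s e u v})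
    (windowEnd s e u) (Set.toFinite _) (Set.sdiff_nonempty.2 hT)
  obtain ⟨c, hcw, hcmax⟩ := Set.exists_max_image {x | ArcsMeet s e x w} (reach s e u w)
    (Set.toFinite _) ⟨w, arcsMeet_self (hse w)⟩
  refine ⟨w, ⟨hwT, hwu⟩, c, hcw, fun d hdw hnot v hv hdv => ?_⟩
  have hwv : windowEnd s e u w ≤ windowEnd s e u v := hwmin v hv
  have hvd : windowStart s e u v ≤ reach s e u w d := windowStart_le_reach hv.2 hdw hdv hnot
  have hdc : reach s e u w d ≤ reach s e u w c := hcmax d hdw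
  have hc : s c + ⌊windowEnd s e u w - s c⌋ ≤ windowEnd s e u w := by
    linarith [Int.floor_le (windowEnd s e u w - s c)]
  refine ⟨(arcsMeet_iff_translate _).2 ⟨_, hc.trans hwv, hvd.trans hdc⟩, fun hndc => ?_⟩
  have hwc : windowEnd s e u w ≤ reach s e u w c :=
    reach_self hse hwu ▸ hcmax w (arcsMeet_self (hse w))
  have hgap : reach s e u w d < s c + ⌊windowEnd s e u w - s c⌋ := by
    by_contra! hle
    have hd : s d + ⌊windowEnd s e u w - s d⌋ ≤ windowEnd s e u w := by
      linarith [Int.floor_le (windowEnd s e u w - s d)]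
    exact hndc ((arcsMeet_iff_translate _).2 ⟨_, hd.trans hwc, hle⟩)
  exact (arcsMeet_iff_translate _).2 ⟨windowShift s e u w,
    (windowStart_le_windowEnd (hse w)).trans hwv, (hvd.trans hgap.le).trans hc⟩

theorem IsCircularArcGraph.hasSweepProperty [Finite V] {G : SimpleGraph V}
    (h : IsCircularArcGraph G) : G.HasSweepProperty := by
  obtain ⟨s, e, hse, hiff⟩ := h
  refine hasSweepProperty_of_arcModel hse fun x y hxy => ?_
  rw [hiff x y hxy, circleArc_inter_nonempty_iff (hse x) (hse y)]
  rfl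

end ArcModel

theorem circularArc_TSReachable_of_mem_general {V : Type*} [Fintype V] [DecidableEq V]
    (G : SimpleGraph V) (hconn : G.Connected) (harc : IsCircularArcGraph G)
    (u : V) (k : ℕ)
    (D₁ D₂ : Multiset V)
    (hD₁ : IsDominatingMultiset G D₁) (hD₂ : IsDominatingMultiset G D₂)
    (hc₁ : Multiset.card D₁ = k) (hc₂ : Multiset.card D₂ = k)
    (hu₁ : u ∈ D₁) (hu₂ : u ∈ D₂) :
    TSReachable G D₁ D₂ := by
  rw [← SimpleGraph.slideReachOn_univ]
  exact SimpleGraph.slideReachOn_of_mem hconn.preconnected harc.hasSweepProperty u Set.univ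
    hu₁ hu₂ (hc₁.trans hc₂.symm) (SimpleGraph.dominatesOn_univ_iff.2 hD₁)
    (SimpleGraph.dominatesOn_univ_iff.2 hD₂)

/-- In a connected circular-arc graph, all `k`-element dominating multisets containing a
fixed vertex `u` lie in the same connected component of the TS-reconfiguration graph. -/
theorem circularArc_TSReachable_of_mem {V : Type*} [Fintype V] [DecidableEq V]
    (G : SimpleGraph V) (hconn : G.Connected) (harc : IsCircularArcGraph G)
    (u : V) (k : ℕ) (hk : 0 < k)
    (D₁ D₂ : Multiset V)
    (hD₁ : IsDominatingMultiset G D₁) (hD₂ : IsDominatingMultiset G D₂)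
    (hc₁ : Multiset.card D₁ = k) (hc₂ : Multiset.card D₂ = k)
    (hu₁ : u ∈ D₁) (hu₂ : u ∈ D₂) :
    TSReachable G D₁ D₂ :=
  circularArc_TSReachable_of_mem_general G hconn harc u k D₁ D₂ hD₁ hD₂ hc₁ hc₂ hu₁ hu₂
end

section
/- Let G be a connected finite simple graph, let D be a dominating multiset of G, and let x be a vertex occurring in D such that the multiset D − x obtained by removing one copy of x from D is still a dominating multiset of G. Then for every vertex y of G, the multiset (D − x) + y (remove one copy of x and add one copy of y) is TS-reachable from D. -/
/-! Since `D - x` already dominates, every multiset `(D - x) + z` dominates, so the extra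
token can be slid from `x` to `y` along any walk without ever breaking domination. -/

theorem IsDominatingMultiset.mono {V : Type*} {G : SimpleGraph V} {D D' : Multiset V}
    (hD : IsDominatingMultiset G D) (hle : D ≤ D') : IsDominatingMultiset G D' := fun w =>
  (hD w).imp (fun h => Multiset.mem_of_le hle h)
    fun ⟨u, hu, hadj⟩ => ⟨u, Multiset.mem_of_le hle hu, hadj⟩

theorem IsDominatingMultiset.cons {V : Type*} {G : SimpleGraph V} {D : Multiset V}
    (hD : IsDominatingMultiset G D) (z : V) : IsDominatingMultiset G (z ::ₘ D) :=
  hD.mono (Multiset.le_cons_self D z)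

theorem TSStep.cons_of_adj {V : Type*} [DecidableEq V] {G : SimpleGraph V} {M : Multiset V}
    (hM : IsDominatingMultiset G M) {u v : V} (huv : G.Adj u v) :
    TSStep G (u ::ₘ M) (v ::ₘ M) :=
  ⟨hM.cons u, hM.cons v, u, v, huv, Multiset.mem_cons_self u M,
    by rw [Multiset.erase_cons_head]⟩

theorem TSReachable.cons_of_reachable {V : Type*} [DecidableEq V] {G : SimpleGraph V}
    {M : Multiset V} (hM : IsDominatingMultiset G M) {u v : V} (huv : G.Reachable u v) :
    TSReachable G (u ::ₘ M) (v ::ₘ M) := by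
  rw [SimpleGraph.reachable_iff_reflTransGen] at huv
  induction huv with
  | refl => exact Relation.ReflTransGen.refl
  | tail _ hadj ih => exact ih.tail (TSStep.cons_of_adj hM hadj)

theorem TSReachable_move_redundant_token_general {V : Type*} [DecidableEq V]
    (G : SimpleGraph V) (hconn : G.Connected)
    (D : Multiset V)
    (x : V) (hx : x ∈ D) (hDx : IsDominatingMultiset G (D.erase x))
    (y : V) :
    TSReachable G D (y ::ₘ D.erase x) := by
  have hreach := TSReachable.cons_of_reachable hDx (hconn.preconnected x y)
  rwa [Multiset.cons_erase hx] at hreach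

/-- In a connected graph, if a token on `x` can be removed from a dominating multiset `D`
while keeping domination, then it can be moved to any vertex `y`: the multiset obtained
from `D` by removing a copy of `x` and adding a copy of `y` is TS-reachable from `D`. -/
theorem TSReachable_move_redundant_token {V : Type*} [Fintype V] [DecidableEq V]
    (G : SimpleGraph V) (hconn : G.Connected)
    (D : Multiset V) (hD : IsDominatingMultiset G D)
    (x : V) (hx : x ∈ D) (hDx : IsDominatingMultiset G (D.erase x))
    (y : V) :
    TSReachable G D (y ::ₘ D.erase x) :=
  TSReachable_move_redundant_token_general G hconn D x hx hDx y
end
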